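/- Let g : ℝ → ℝ be a non-decreasing continuous function and G ≥ 0 satisfy g(−γ) + G > 0 and g(γ) − G < 0, and let φ : ℝ → [0,∞) be a convex, non-increasing margin-based loss. Then the supremum-based surrogate φ̃(f,x,y) = sup_{x' : ‖x−x'‖ ≤ γ} φ(y·f(x')) is not H_g-calibrated with respect to the adversarial 0/1 loss ℓ_γ. In particular, if G > γ, then φ̃ is not H_relu-calibrated with respect to ℓ_γ. -/

import Mathlib

open scoped RealInnerProductSpace

noncomputable section

/-- A loss assigns a value to a predictor `f`, a point `x`, and a label `y` (±1). -/
abbrev Loss (d : ℕ) := ((EuclideanSpace ℝ (Fin d)) → ℝ) → (EuclideanSpace ℝ (Fin d)) → ℝ → ℝ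

variable {d : ℕ}

/-- The inner (conditional) ℓ-risk. -/
def innerRisk (ℓ : Loss d) (f : EuclideanSpace ℝ (Fin d) → ℝ)
    (x : EuclideanSpace ℝ (Fin d)) (η : ℝ) : ℝ :=
  η * ℓ f x 1 + (1 - η) * ℓ f x (-1)

/-- The minimal inner ℓ-risk over a hypothesis set `H`. -/
def minInnerRisk (ℓ : Loss d) (H : Set (EuclideanSpace ℝ (Fin d) → ℝ))
    (x : EuclideanSpace ℝ (Fin d)) (η : ℝ) : ℝ :=
  ⨅ f : H, innerRisk ℓ f x η

/-- ℓ₁ is H-calibrated with respect to ℓ₂. -/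
def Calibrated (H : Set (EuclideanSpace ℝ (Fin d) → ℝ)) (ℓ₁ ℓ₂ : Loss d) : Prop :=
  ∀ ε > (0:ℝ), ∀ η ∈ Set.Icc (0:ℝ) 1, ∀ x : EuclideanSpace ℝ (Fin d), ‖x‖ ≤ 1 →
    ∃ δ > (0:ℝ), ∀ f ∈ H,
      innerRisk ℓ₁ f x η < minInnerRisk ℓ₁ H x η + δ →
      innerRisk ℓ₂ f x η < minInnerRisk ℓ₂ H x η + ε

/-- The adversarial 0/1 loss with perturbation radius γ. -/
def advLoss (γ : ℝ) : Loss d := fun f x y =>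
  ⨆ x' : Metric.closedBall x γ, (if y * f ↑x' ≤ 0 then (1:ℝ) else 0)

/-- A margin-based loss viewed as a loss. -/
def marginLoss (φ : ℝ → ℝ) : Loss d := fun f x y => φ (y * f x)

/-- The supremum-based surrogate of a margin-based loss. -/
def supLoss (γ : ℝ) (φ : ℝ → ℝ) : Loss d := fun f x y =>
  ⨆ x' : Metric.closedBall x γ, φ (y * f ↑x')

/-- Infimum of f over the closed γ-ball around x. -/
def infBall (γ : ℝ) (f : EuclideanSpace ℝ (Fin d) → ℝ) (x : EuclideanSpace ℝ (Fin d)) : ℝ :=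
  ⨅ x' : Metric.closedBall x γ, f ↑x'

/-- Supremum of f over the closed γ-ball around x. -/
def supBall (γ : ℝ) (f : EuclideanSpace ℝ (Fin d) → ℝ) (x : EuclideanSpace ℝ (Fin d)) : ℝ :=
  ⨆ x' : Metric.closedBall x γ, f ↑x'

/-- x is a distinguishing point for H. -/
def Distinguishing (γ : ℝ) (H : Set (EuclideanSpace ℝ (Fin d) → ℝ))
    (x : EuclideanSpace ℝ (Fin d)) : Prop :=
  ‖x‖ ≤ 1 ∧ (∃ f ∈ H, 0 < infBall γ f x) ∧ (∃ g ∈ H, supBall γ g x < 0)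

/-- H is regular for adversarial calibration. -/
def RegularAdv (γ : ℝ) (H : Set (EuclideanSpace ℝ (Fin d) → ℝ)) : Prop :=
  ∃ x, Distinguishing γ H x

/-- H is symmetric. -/
def SymmetricH (H : Set (EuclideanSpace ℝ (Fin d) → ℝ)) : Prop :=
  ∀ f ∈ H, -f ∈ H

/-- Linear hypothesis set. -/
def Hlin (d : ℕ) : Set (EuclideanSpace ℝ (Fin d) → ℝ) :=
  { f | ∃ w : EuclideanSpace ℝ (Fin d), ‖w‖ = 1 ∧ f = fun x => (inner ℝ w x : ℝ) }

/-- Generalized linear hypothesis set. -/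
def Hg (d : ℕ) (g : ℝ → ℝ) (G : ℝ) : Set (EuclideanSpace ℝ (Fin d) → ℝ) :=
  { f | ∃ (w : EuclideanSpace ℝ (Fin d)) (b : ℝ), ‖w‖ = 1 ∧ |b| ≤ G ∧
      f = fun x => g (inner ℝ w x : ℝ) + b }

/-- ReLU-based hypothesis set. -/
def Hrelu (d : ℕ) (G : ℝ) : Set (EuclideanSpace ℝ (Fin d) → ℝ) :=
  Hg d (fun t => max t 0) G

/-- One-layer ReLU neural network hypothesis set. -/
def Hnn (d n : ℕ) (Λ W : ℝ) : Set (EuclideanSpace ℝ (Fin d) → ℝ) :=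
  { f | ∃ (u : Fin n → ℝ) (w : Fin n → EuclideanSpace ℝ (Fin d)),
      (∑ j, |u j|) ≤ Λ ∧ (∀ j, ‖w j‖ ≤ W) ∧
      f = fun x => ∑ j, u j * max (inner ℝ (w j) x : ℝ) 0 }

/-- All (Borel) measurable functions. -/
def Hall (d : ℕ) : Set (EuclideanSpace ℝ (Fin d) → ℝ) :=
  { f | Measurable f }

/-- The ρ-margin loss. -/
def phiRho (ρ t : ℝ) : ℝ := min 1 (max 0 (1 - t / ρ))

/-!
At `x = 0`, a predictor `x ↦ g ⟪v, x⟫ + b` of `H_g` has its worst margins on the `γ`-ball at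
`∓γ • v`, so for every antitone `ψ` its `ψ̃`-risk at `η = 1/2` is
`(ψ (g (-γ) + b) + ψ (-(g γ + b))) / 2`; the adversarial 0/1 loss is the case of the step
function `ψ t = 1[t ≤ 0]`. For the convex `φ` this risk is at least `φ ((g (-γ) - g γ) / 2)`,
with equality for the centred bias `b₀ = -(g (-γ) + g γ) / 2`. That exact surrogate minimiser
has margin `(g (-γ) - g γ) / 2 ≤ 0` at both `∓γ • v`, so its adversarial risk is `1`, while the
bias `b = G` classifies the whole ball as positive and has adversarial risk at most `1/2`.
-/

theorem advLoss_eq_supLoss (γ : ℝ) :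
    (advLoss γ : Loss d) = supLoss γ (fun t => if t ≤ 0 then 1 else 0) := rfl

theorem antitone_ite_nonpos : Antitone fun t : ℝ => if t ≤ 0 then (1 : ℝ) else 0 := by
  intro s t hst
  by_cases ht : t ≤ 0
  · simp [ht, hst.trans ht]
  · simp only [ht, if_false]
    split_ifs <;> norm_num

theorem advLoss_nonneg (γ : ℝ) (f : EuclideanSpace ℝ (Fin d) → ℝ) (x : EuclideanSpace ℝ (Fin d))
    (y : ℝ) : 0 ≤ advLoss γ f x y :=
  Real.iSup_nonneg fun _ => by split_ifs <;> norm_num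

theorem minInnerRisk_le_innerRisk {ℓ : Loss d} (hℓ : ∀ f x y, 0 ≤ ℓ f x y)
    {H : Set (EuclideanSpace ℝ (Fin d) → ℝ)} {f : EuclideanSpace ℝ (Fin d) → ℝ} (hf : f ∈ H)
    (x : EuclideanSpace ℝ (Fin d)) {η : ℝ} (hη : η ∈ Set.Icc (0 : ℝ) 1) :
    minInnerRisk ℓ H x η ≤ innerRisk ℓ f x η := by
  refine ciInf_le ⟨0, ?_⟩ (⟨f, hf⟩ : H)
  rintro _ ⟨f', rfl⟩
  have := hℓ f' x 1
  have := hℓ f' x (-1)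
  simp only [innerRisk]
  nlinarith [hη.1, hη.2]

theorem not_calibrated_of_minimizer {H : Set (EuclideanSpace ℝ (Fin d) → ℝ)} {ℓ₁ ℓ₂ : Loss d}
    {x : EuclideanSpace ℝ (Fin d)} (hx : ‖x‖ ≤ 1) {η : ℝ} (hη : η ∈ Set.Icc (0 : ℝ) 1)
    {f₀ : EuclideanSpace ℝ (Fin d) → ℝ} (hf₀ : f₀ ∈ H)
    (hmin : ∀ f ∈ H, innerRisk ℓ₁ f₀ x η ≤ innerRisk ℓ₁ f x η) {ε : ℝ} (hε : 0 < ε)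
    (hgap : minInnerRisk ℓ₂ H x η + ε ≤ innerRisk ℓ₂ f₀ x η) :
    ¬ Calibrated H ℓ₁ ℓ₂ := by
  intro hcal
  obtain ⟨δ, hδ, himp⟩ := hcal ε hε η hη x hx
  have : Nonempty H := ⟨⟨f₀, hf₀⟩⟩
  have hopt : innerRisk ℓ₁ f₀ x η ≤ minInnerRisk ℓ₁ H x η := le_ciInf fun f => hmin f f.2
  exact (himp f₀ hf₀ (by linarith)).not_ge hgap

theorem ConvexOn.map_add_div_two_le {φ : ℝ → ℝ} (hφ : ConvexOn ℝ Set.univ φ) (a c : ℝ) :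
    φ ((a + c) / 2) ≤ (φ a + φ c) / 2 := by
  have := hφ.2 (Set.mem_univ a) (Set.mem_univ c) (by norm_num : (0 : ℝ) ≤ 1 / 2)
    (by norm_num : (0 : ℝ) ≤ 1 / 2) (by norm_num)
  rw [smul_eq_mul, smul_eq_mul, smul_eq_mul, smul_eq_mul] at this
  rw [show (a + c) / 2 = 1 / 2 * a + 1 / 2 * c by ring]
  linarith

section InnerProductSpace

variable {E : Type*} [NormedAddCommGroup E] [InnerProductSpace ℝ E] {v : E}

theorem inner_mem_Icc_of_mem_closedBall (hv : ‖v‖ = 1) {γ : ℝ} {z : E}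
    (hz : z ∈ Metric.closedBall (0 : E) γ) : ⟪v, z⟫ ∈ Set.Icc (-γ) γ := by
  rw [mem_closedBall_zero_iff] at hz
  have := abs_real_inner_le_norm v z
  rw [hv, one_mul] at this
  exact abs_le.1 (this.trans hz)

theorem smul_mem_closedBall_zero (hv : ‖v‖ = 1) {γ c : ℝ} (hc : |c| ≤ γ) :
    c • v ∈ Metric.closedBall (0 : E) γ := by
  rwa [mem_closedBall_zero_iff, norm_smul, hv, mul_one, Real.norm_eq_abs]

theorem inner_smul_self_of_norm_eq_one (hv : ‖v‖ = 1) (c : ℝ) : ⟪v, c • v⟫ = c := by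
  rw [real_inner_smul_right, real_inner_self_eq_norm_sq, hv]
  ring

end InnerProductSpace

def genLinear (g : ℝ → ℝ) (v : EuclideanSpace ℝ (Fin d)) (b : ℝ) :
    EuclideanSpace ℝ (Fin d) → ℝ :=
  fun x => g ⟪v, x⟫ + b

section GenLinear

variable {g : ℝ → ℝ} {v : EuclideanSpace ℝ (Fin d)} {γ : ℝ}

theorem genLinear_mem_Hg (hv : ‖v‖ = 1) {b G : ℝ} (hb : |b| ≤ G) : genLinear g v b ∈ Hg d g G :=
  ⟨v, b, hv, hb, rfl⟩

theorem supLoss_genLinear_one (hg : Monotone g) (hv : ‖v‖ = 1) (hγ : 0 ≤ γ) (b : ℝ)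
    {ψ : ℝ → ℝ} (hψ : Antitone ψ) : supLoss γ ψ (genLinear g v b) 0 1 = ψ (g (-γ) + b) := by
  have hmem := smul_mem_closedBall_zero hv (c := -γ) (by rw [abs_neg, abs_of_nonneg hγ])
  have hmax : IsMaxOn (fun z => ψ (1 * genLinear g v b z)) (Metric.closedBall 0 γ) ((-γ) • v) :=
    isMaxOn_iff.2 fun z hz => hψ <| by
      simp only [genLinear, one_mul, inner_smul_self_of_norm_eq_one hv]
      gcongr
      exact hg (inner_mem_Icc_of_mem_closedBall hv hz).1
  refine (hmax.iSup_eq hmem).trans ?_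
  simp only [genLinear, one_mul, inner_smul_self_of_norm_eq_one hv]

theorem supLoss_genLinear_neg_one (hg : Monotone g) (hv : ‖v‖ = 1) (hγ : 0 ≤ γ) (b : ℝ)
    {ψ : ℝ → ℝ} (hψ : Antitone ψ) : supLoss γ ψ (genLinear g v b) 0 (-1) = ψ (-(g γ + b)) := by
  have hmem := smul_mem_closedBall_zero hv (c := γ) (by rw [abs_of_nonneg hγ])
  have hmax : IsMaxOn (fun z => ψ (-1 * genLinear g v b z)) (Metric.closedBall 0 γ) (γ • v) :=
    isMaxOn_iff.2 fun z hz => hψ <| by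
      simp only [genLinear, neg_one_mul, inner_smul_self_of_norm_eq_one hv]
      gcongr
      exact hg (inner_mem_Icc_of_mem_closedBall hv hz).2
  refine (hmax.iSup_eq hmem).trans ?_
  simp only [genLinear, neg_one_mul, inner_smul_self_of_norm_eq_one hv]

theorem innerRisk_supLoss_genLinear (hg : Monotone g) (hv : ‖v‖ = 1) (hγ : 0 ≤ γ) (b : ℝ)
    {ψ : ℝ → ℝ} (hψ : Antitone ψ) :
    innerRisk (supLoss γ ψ) (genLinear g v b) 0 (1 / 2) =
      (ψ (g (-γ) + b) + ψ (-(g γ + b))) / 2 := by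
  rw [innerRisk, supLoss_genLinear_one hg hv hγ b hψ, supLoss_genLinear_neg_one hg hv hγ b hψ]
  ring

end GenLinear

theorem not_calibrated_supLoss_Hg (hd : 1 ≤ d) {γ : ℝ} (hγ : 0 < γ) {g : ℝ → ℝ}
    (hg : Monotone g) {G : ℝ} (hg₁ : 0 < g (-γ) + G) (hg₂ : g γ - G < 0) {φ : ℝ → ℝ}
    (hconv : ConvexOn ℝ Set.univ φ) (hφ : Antitone φ) :
    ¬ Calibrated (Hg d g G) (supLoss γ φ) (advLoss γ) := by
  obtain ⟨w, hw⟩ : ∃ w : EuclideanSpace ℝ (Fin d), ‖w‖ = 1 :=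
    ⟨EuclideanSpace.single ⟨0, hd⟩ 1, by simp⟩
  have hgγ : g (-γ) ≤ g γ := hg (neg_le_self hγ.le)
  have hrisk := innerRisk_supLoss_genLinear hg hw hγ.le
  set b₀ := -(g (-γ) + g γ) / 2 with hb₀
  refine not_calibrated_of_minimizer (x := 0) (η := 1 / 2) (ε := 1 / 2) (by simp) (by norm_num)
    (genLinear_mem_Hg hw (abs_le.2 ⟨by linarith, by linarith⟩)) ?_ (by norm_num) ?_
  · rintro _ ⟨v, b, hv, -, rfl⟩
    calc innerRisk (supLoss γ φ) (genLinear g w b₀) 0 (1 / 2)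
        = φ ((g (-γ) + b + -(g γ + b)) / 2) := by
          rw [hrisk b₀ hφ, show g (-γ) + b₀ = (g (-γ) + b + -(g γ + b)) / 2 by rw [hb₀]; ring,
            show -(g γ + b₀) = (g (-γ) + b + -(g γ + b)) / 2 by rw [hb₀]; ring]
          ring
      _ ≤ (φ (g (-γ) + b) + φ (-(g γ + b))) / 2 := hconv.map_add_div_two_le _ _
      _ = _ := (innerRisk_supLoss_genLinear hg hv hγ.le b hφ).symm
  · calc minInnerRisk (advLoss γ) (Hg d g G) 0 (1 / 2) + 1 / 2
        ≤ innerRisk (advLoss γ) (genLinear g w G) 0 (1 / 2) + 1 / 2 := by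
          gcongr
          exact minInnerRisk_le_innerRisk (advLoss_nonneg γ)
            (genLinear_mem_Hg hw (abs_le.2 ⟨by linarith, le_rfl⟩)) 0 (by norm_num)
      _ ≤ 1 := by
          rw [advLoss_eq_supLoss, hrisk G antitone_ite_nonpos, if_neg hg₁.not_ge]
          split_ifs <;> norm_num
      _ = innerRisk (advLoss γ) (genLinear g w b₀) 0 (1 / 2) := by
          rw [advLoss_eq_supLoss, hrisk b₀ antitone_ite_nonpos,
            if_pos (by linarith : g (-γ) + b₀ ≤ 0), if_pos (by linarith : -(g γ + b₀) ≤ 0)]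
          norm_num

theorem stmt6_general (d : ℕ) (hd : 1 ≤ d) (γ : ℝ) (hγ0 : 0 < γ)
    (g : ℝ → ℝ) (hgmono : Monotone g)
    (G : ℝ) (hg1 : 0 < g (-γ) + G) (hg2 : g γ - G < 0)
    (φ : ℝ → ℝ) (hconv : ConvexOn ℝ Set.univ φ)
    (hanti : Antitone φ) :
    ¬ Calibrated (Hg d g G) (supLoss γ φ) (advLoss γ) ∧
    (γ < G → ¬ Calibrated (Hrelu d G) (supLoss γ φ) (advLoss γ)) := by
  refine ⟨not_calibrated_supLoss_Hg hd hγ0 hgmono hg1 hg2 hconv hanti, fun hγG => ?_⟩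
  refine not_calibrated_supLoss_Hg hd hγ0 (monotone_id.max monotone_const) ?_ ?_ hconv hanti
  · show 0 < max (-γ) 0 + G
    rw [max_eq_right (neg_nonpos.2 hγ0.le)]
    linarith
  · show max γ 0 - G < 0
    rw [max_eq_left hγ0.le]
    linarith

theorem stmt6 (d : ℕ) (hd : 1 ≤ d) (γ : ℝ) (hγ0 : 0 < γ) (hγ1 : γ < 1)
    (g : ℝ → ℝ) (hgmono : Monotone g) (hgcont : Continuous g)
    (G : ℝ) (hG : 0 ≤ G) (hg1 : 0 < g (-γ) + G) (hg2 : g γ - G < 0)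
    (φ : ℝ → ℝ) (hφ0 : ∀ t, 0 ≤ φ t) (hconv : ConvexOn ℝ Set.univ φ)
    (hanti : Antitone φ) :
    ¬ Calibrated (Hg d g G) (supLoss γ φ) (advLoss γ) ∧
    (γ < G → ¬ Calibrated (Hrelu d G) (supLoss γ φ) (advLoss γ)) :=
  stmt6_general d hd γ hγ0 g hgmono G hg1 hg2 φ hconv hanti

end
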